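/- arXiv:2102.05591 — 2 statements merged into one kernel-verified Lean document; each statement's English description precedes it below -/
import Mathlib

section
/- For positive integers m₁, m₂, the sum ∑_{k=0}^{m₁-1} k² · (m₂)_{m₁-1-k} (1-m₂)_k / ((m₁-1-k)! · k!) equals (1-m₂) · ((2-m₂)·m₁(m₁+1)/2 - (3-2m₂)·m₁ + (1-m₂)). -/
/-- Pochhammer symbol (rising factorial) `(a)_k = a(a+1)⋯(a+k-1)` over ℝ. -/
noncomputable def poch (a : ℝ) (k : ℕ) : ℝ := (ascPochhammer ℝ k).eval a

lemma poch_zero (a : ℝ) : poch a 0 = 1 := by simp [poch]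

lemma poch_succ_right (a : ℝ) (k : ℕ) : poch a (k+1) = poch a k * (a + k) := by
  simp [poch, ascPochhammer_succ_right]

lemma poch_succ_left (a : ℝ) (k : ℕ) : poch a (k+1) = a * poch (a+1) k := by
  simp [poch, ascPochhammer_succ_left]

lemma vand (x y : ℝ) : ∀ m : ℕ, ∑ j ∈ Finset.range (m+1),
    (m.choose j : ℝ) * poch x (m-j) * poch y j = poch (x+y) m := by
  intro m
  induction m with
  | zero => simp [poch_zero]
  | succ m ih =>
    have hA : ∑ j ∈ Finset.range (m+2), ((m+1).choose j : ℝ) * poch x (m+1-j) * poch y j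
        = (∑ j ∈ Finset.range (m+1), (m.choose j : ℝ) * poch x (m+1-j) * poch y j)
          + ∑ j ∈ Finset.range (m+1), (m.choose j : ℝ) * poch x (m-j) * poch y (j+1) := by
      rw [Finset.sum_range_succ' (fun j => ((m+1).choose j : ℝ) * poch x (m+1-j) * poch y j) (m+1),
        Finset.sum_range_succ' (fun j => (m.choose j : ℝ) * poch x (m+1-j) * poch y j) m]
      simp only [Nat.succ_sub_succ, Nat.choose_succ_succ, Nat.cast_add, Nat.choose_zero_right,
        Nat.cast_one, Nat.sub_zero, add_mul, Finset.sum_add_distrib, one_mul]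
      have hz : ∑ k ∈ Finset.range (m+1), (m.choose (k+1) : ℝ) * poch x (m-k) * poch y (k+1)
          = ∑ k ∈ Finset.range m, (m.choose (k+1) : ℝ) * poch x (m-k) * poch y (k+1) := by
        rw [Finset.sum_range_succ, Nat.choose_succ_self]
        simp
      rw [hz]
      ring
    rw [hA]
    have e1 : ∀ j ∈ Finset.range (m+1),
        (m.choose j : ℝ) * poch x (m+1-j) * poch y j
        = (m.choose j : ℝ) * poch x (m-j) * poch y j * (x + (m - j : ℕ)) := by
      intro j hj
      have h : m + 1 - j = (m - j) + 1 := by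
        simp at hj; omega
      rw [h, poch_succ_right]; ring
    have e2 : ∀ j ∈ Finset.range (m+1),
        (m.choose j : ℝ) * poch x (m-j) * poch y (j+1)
        = (m.choose j : ℝ) * poch x (m-j) * poch y j * (y + j) := by
      intro j hj
      rw [poch_succ_right]; ring
    rw [Finset.sum_congr rfl e1, Finset.sum_congr rfl e2, ← Finset.sum_add_distrib]
    have e3 : ∀ j ∈ Finset.range (m+1),
        (m.choose j : ℝ) * poch x (m-j) * poch y j * (x + (m - j : ℕ))
        + (m.choose j : ℝ) * poch x (m-j) * poch y j * (y + j)
        = ((m.choose j : ℝ) * poch x (m-j) * poch y j) * (x + y + m) := by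
      intro j hj
      simp only [Finset.mem_range] at hj
      have : ((m - j : ℕ) : ℝ) = (m : ℝ) - (j : ℝ) := by
        rw [Nat.cast_sub (by omega)]
      rw [this]; ring
    rw [Finset.sum_congr rfl e3, ← Finset.sum_mul, ih, poch_succ_right]

lemma vandDiv (x y : ℝ) (m : ℕ) : ∑ j ∈ Finset.range (m+1),
    poch x (m-j) * poch y j / ((m-j).factorial * j.factorial)
    = poch (x+y) m / m.factorial := by
  rw [← vand x y m, Finset.sum_div]
  apply Finset.sum_congr rfl
  intro j hj
  simp only [Finset.mem_range] at hj
  have hle : j ≤ m := by omega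
  have hfac : (m.choose j : ℝ) * j.factorial * (m-j).factorial = m.factorial := by
    exact_mod_cast congrArg (Nat.cast : ℕ → ℝ) (Nat.choose_mul_factorial_mul_factorial hle)
  have h1 : ((m-j).factorial : ℝ) ≠ 0 := by positivity
  have h2 : (j.factorial : ℝ) ≠ 0 := by positivity
  have h3 : (m.factorial : ℝ) ≠ 0 := by positivity
  rw [div_eq_div_iff (by positivity) h3]
  linear_combination (-(poch x (m - j) * poch y j)) * hfac

lemma poch_two (k : ℕ) : poch 2 k = (k+1).factorial := by
  induction k with
  | zero => simp [poch_zero]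
  | succ k ih =>
    have h : ((k+1)+1).factorial = (k+1).factorial * (k+2) := by
      rw [Nat.factorial_succ]; ring
    rw [poch_succ_right, ih, h]
    push_cast
    ring

lemma poch_three (k : ℕ) : 2 * poch 3 k = (k+2).factorial := by
  induction k with
  | zero => simp [poch_zero]
  | succ k ih =>
    rw [poch_succ_right]
    have : (k+1+2).factorial = (k+2).factorial * (k+3) := by
      rw [show k+1+2 = (k+2)+1 by ring, Nat.factorial_succ]; ring
    rw [this]
    push_cast
    nlinarith [ih]

lemma fac_ne (k : ℕ) : (k.factorial : ℝ) ≠ 0 := by positivity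

lemma sumS1 (b : ℝ) (n : ℕ) : ∑ k ∈ Finset.range (n+1),
    (k:ℝ) * (poch b (n-k) * poch (1-b) k / ((n-k).factorial * k.factorial))
    = (1-b) * n := by
  rw [Finset.sum_range_succ' (fun k => (k:ℝ) * (poch b (n-k) * poch (1-b) k /
      ((n-k).factorial * k.factorial))) n]
  have e : ∀ k ∈ Finset.range n, ((k+1:ℕ):ℝ) * (poch b (n-(k+1)) * poch (1-b) (k+1) /
      ((n-(k+1)).factorial * (k+1).factorial))
      = (1-b) * (poch b (n-1-k) * poch (2-b) k / ((n-1-k).factorial * k.factorial)) := by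
    intro k hk
    have h1 : n - (k+1) = n - 1 - k := by omega
    have h2 : poch (1-b) (k+1) = (1-b) * poch (2-b) k := by
      rw [poch_succ_left, show (1-b)+1 = 2-b by ring]
    rw [h1, h2, Nat.factorial_succ]
    have hk1 : ((k+1:ℕ):ℝ) ≠ 0 := by positivity
    field_simp
    push_cast
    ring
  rw [Finset.sum_congr rfl e]
  simp only [Nat.cast_zero, zero_mul, add_zero]
  match n with
  | 0 => simp
  | (t+1) =>
    rw [← Finset.mul_sum]
    have e2 : ∀ k ∈ Finset.range (t+1),
        poch b (t+1-1-k) * poch (2-b) k / (((t+1-1-k).factorial : ℝ) * k.factorial)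
        = poch b (t-k) * poch (2-b) k / (((t-k).factorial : ℝ) * k.factorial) := by
      intro k hk
      congr 2 <;> omega
    rw [Finset.sum_congr rfl e2, vandDiv b (2-b) t, show b + (2-b) = 2 by ring, poch_two]
    have : ((t+1).factorial : ℝ) = (t+1) * t.factorial := by
      rw [Nat.factorial_succ]; push_cast; ring
    rw [this]
    field_simp
    push_cast
    ring

lemma sumS2 (b : ℝ) (n : ℕ) : ∑ k ∈ Finset.range (n+1),
    (k:ℝ) * ((k:ℝ)-1) * (poch b (n-k) * poch (1-b) k / ((n-k).factorial * k.factorial))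
    = (1-b) * (2-b) * (n * (n-1)) / 2 := by
  rw [Finset.sum_range_succ' (fun k => (k:ℝ) * ((k:ℝ)-1) * (poch b (n-k) * poch (1-b) k /
      ((n-k).factorial * k.factorial))) n]
  simp only [Nat.cast_zero, zero_mul, add_zero]
  match n with
  | 0 => simp
  | (t+1) =>
    rw [Finset.sum_range_succ' (fun k => ((k+1:ℕ):ℝ) * (((k+1:ℕ):ℝ)-1) *
        (poch b (t+1-(k+1)) * poch (1-b) (k+1) / ((t+1-(k+1)).factorial * (k+1).factorial))) t]
    norm_num
    have e : ∀ k ∈ Finset.range t, ((k:ℝ)+1+1) * ((k:ℝ)+1) *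
        (poch b (t+1-(k+1+1)) * poch (1-b) (k+1+1) / ((t+1-(k+1+1)).factorial * (k+1+1).factorial))
        = (1-b) * (2-b) * (poch b (t-1-k) * poch (3-b) k / ((t-1-k).factorial * k.factorial)) := by
      intro k hk
      have h1 : t + 1 - (k+1+1) = t - 1 - k := by omega
      have h2 : poch (1-b) (k+1+1) = (1-b) * ((2-b) * poch (3-b) k) := by
        rw [poch_succ_left, show (1-b)+1 = 2-b by ring, poch_succ_left,
          show (2-b)+1 = 3-b by ring]
      have h3 : ((k+1+1).factorial : ℝ) = (k+2) * ((k+1) * k.factorial) := by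
        rw [show k+1+1 = (k+1)+1 from rfl, Nat.factorial_succ, Nat.factorial_succ]
        push_cast; ring
      rw [h1, h2, h3]
      have hk2 : ((k:ℝ)+2) ≠ 0 := by positivity
      have hk1 : ((k:ℝ)+1) ≠ 0 := by positivity
      push_cast
      field_simp
      ring
    rw [Finset.sum_congr rfl e]
    match t with
    | 0 => simp
    | (s+1) =>
      rw [← Finset.mul_sum]
      have e2 : ∀ k ∈ Finset.range (s+1),
          poch b (s+1-1-k) * poch (3-b) k / (((s+1-1-k).factorial : ℝ) * k.factorial)
          = poch b (s-k) * poch (3-b) k / (((s-k).factorial : ℝ) * k.factorial) := by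
        intro k hk
        congr 2 <;> omega
      rw [Finset.sum_congr rfl e2, vandDiv b (3-b) s, show b + (3-b) = 3 by ring]
      have h3 : poch 3 s = ((s+2).factorial : ℝ) / 2 := by
        rw [← poch_three]; ring
      have h4 : ((s+2).factorial : ℝ) = (s+2) * ((s+1) * s.factorial) := by
        rw [show s+2 = (s+1)+1 from rfl, Nat.factorial_succ, Nat.factorial_succ]
        push_cast; ring
      rw [h3, h4]
      have := fac_ne s
      push_cast
      field_simp
      ring

theorem stmt5 (m₁ m₂ : ℕ) (hm₁ : 0 < m₁) (hm₂ : 0 < m₂) :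
    ∑ k ∈ Finset.range m₁,
      (k : ℝ) ^ 2 * poch m₂ (m₁ - 1 - k) * poch (1 - m₂) k /
        ((Nat.factorial (m₁ - 1 - k) : ℝ) * (Nat.factorial k : ℝ)) =
      (1 - (m₂ : ℝ)) *
        ((2 - (m₂ : ℝ)) * (m₁ : ℝ) * ((m₁ : ℝ) + 1) / 2
          - (3 - 2 * (m₂ : ℝ)) * (m₁ : ℝ) + (1 - (m₂ : ℝ))) := by
  obtain ⟨n, rfl⟩ : ∃ n, m₁ = n + 1 := ⟨m₁ - 1, by omega⟩
  set b := (m₂ : ℝ) with hb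
  have key : ∀ k ∈ Finset.range (n+1),
      (k : ℝ) ^ 2 * poch b (n+1-1-k) * poch (1-b) k /
        ((Nat.factorial (n+1-1-k) : ℝ) * (Nat.factorial k : ℝ))
      = (k:ℝ)*((k:ℝ)-1) * (poch b (n-k) * poch (1-b) k / ((n-k).factorial * k.factorial))
        + (k:ℝ) * (poch b (n-k) * poch (1-b) k / ((n-k).factorial * k.factorial)) := by
    intro k hk
    have h : n+1-1-k = n-k := by omega
    rw [h]; ring
  rw [Finset.sum_congr rfl key, Finset.sum_add_distrib, sumS2, sumS1]
  push_cast
  ring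
end

section
/- Let h₁, h₂ be independent random variables each following a Nakagami-m distribution with shape parameters m₁, m₂ > 0 and spread parameters Ω₁, Ω₂ > 0. Then the product Z = h₁h₂ has probability density f_Z(z) = (4 z^{m₁+m₂-1} / (Γ(m₁)Γ(m₂))) (m₁m₂/(Ω₁Ω₂))^{(m₁+m₂)/2} K_{m₁-m₂}(2z√(m₁m₂/(Ω₁Ω₂))) for z > 0. -/
open Real MeasureTheory

/-- Modified Bessel function of the second kind of order `ν`, via the
standard integral representation (valid for `x > 0`). -/
noncomputable def besselK (ν x : ℝ) : ℝ :=
  ∫ t in Set.Ioi (0 : ℝ), Real.exp (-x * Real.cosh t) * Real.cosh (ν * t)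

/-- Density of the Nakagami-m distribution with shape `m` and spread `Ω`. -/
noncomputable def nakPdf (m Ω x : ℝ) : ℝ :=
  if 0 < x then 2 * m ^ m / (Real.Gamma m * Ω ^ m) * x ^ (2 * m - 1) *
    Real.exp (-m * x ^ 2 / Ω) else 0

/-- The law of a Nakagami-m random variable with shape `m` and spread `Ω`. -/
noncomputable def nakMeasure (m Ω : ℝ) : Measure ℝ :=
  volume.withDensity fun x => ENNReal.ofReal (nakPdf m Ω x)

/-- Claimed density of the product of two independent Nakagami-m variables
(double-Nakagami-m distribution). -/
noncomputable def dnakPdf (m₁ m₂ Ω₁ Ω₂ z : ℝ) : ℝ :=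
  if 0 < z then
    4 * z ^ (m₁ + m₂ - 1) / (Real.Gamma m₁ * Real.Gamma m₂) *
      (m₁ * m₂ / (Ω₁ * Ω₂)) ^ ((m₁ + m₂) / 2) *
        besselK (m₁ - m₂) (2 * z * Real.sqrt (m₁ * m₂ / (Ω₁ * Ω₂)))
  else 0

open Set Filter
lemma nakPdf_nonneg {m Ω : ℝ} (hm : 0 < m) (hΩ : 0 < Ω) (x : ℝ) : 0 ≤ nakPdf m Ω x := by
  unfold nakPdf
  split
  · have := Real.Gamma_pos_of_pos hm
    positivity
  · exact le_refl 0

lemma nakPdf_of_nonpos {m Ω x : ℝ} (hx : x ≤ 0) : nakPdf m Ω x = 0 := by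
  simp [nakPdf, not_lt.2 hx]

lemma measurable_nakPdf (m Ω : ℝ) : Measurable (nakPdf m Ω) := by
  have : nakPdf m Ω = fun x => if 0 < x then 2 * m ^ m / (Real.Gamma m * Ω ^ m) *
      Real.exp (Real.log x * (2 * m - 1)) * Real.exp (-m * x ^ 2 / Ω) else 0 := by
    funext x
    unfold nakPdf
    split
    · rw [Real.rpow_def_of_pos ‹0 < x›]
    · rfl
  rw [this]
  refine Measurable.ite measurableSet_Ioi ?_ measurable_const
  exact (measurable_const.mul ((Real.measurable_log.mul measurable_const).exp)).mul
    (((measurable_id.pow_const 2).const_mul (-m) |>.div_const Ω).exp)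

lemma besselK_integrand_integrableOn (ν : ℝ) {x : ℝ} (hx : 0 < x) :
    IntegrableOn (fun t => Real.exp (-x * Real.cosh t) * Real.cosh (ν * t)) (Ioi (0:ℝ)) := by
  apply integrable_of_isBigO_exp_neg (a := 0) (b := 1) one_pos
  · exact ((Real.continuous_exp.comp ((continuous_const.mul Real.continuous_cosh))).mul
      (Real.continuous_cosh.comp (continuous_const.mul continuous_id))).continuousOn
  · rw [Asymptotics.isBigO_iff]
    refine ⟨1, ?_⟩
    -- eventually (|ν|+1) * t ≤ (x/2) * exp t
    have hlin : (fun t : ℝ => (|ν| + 1) * t) =o[atTop] Real.exp := by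
      simpa using (Real.isLittleO_pow_exp_atTop (n := 1)).const_mul_left (|ν| + 1)
    have hev := hlin.def (c := x / 2) (by positivity)
    filter_upwards [hev, eventually_ge_atTop (0:ℝ)] with t ht ht0
    have hch : Real.cosh (ν * t) ≤ Real.exp (|ν| * t) := by
      rw [Real.cosh_eq]
      have h1 : Real.exp (ν * t) ≤ Real.exp (|ν| * t) :=
        Real.exp_le_exp.2 (by nlinarith [le_abs_self ν, abs_nonneg ν])
      have h2 : Real.exp (-(ν * t)) ≤ Real.exp (|ν| * t) :=
        Real.exp_le_exp.2 (by nlinarith [neg_abs_le ν, abs_nonneg ν])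
      linarith
    have hcosh2 : Real.exp t / 2 ≤ Real.cosh t := by
      rw [Real.cosh_eq]
      have := Real.exp_pos (-t)
      linarith
    have ht' : (|ν| + 1) * t ≤ x / 2 * Real.exp t := by
      have : ‖(|ν| + 1) * t‖ ≤ x / 2 * ‖Real.exp t‖ := ht
      rw [Real.norm_eq_abs, Real.norm_eq_abs, abs_of_nonneg (Real.exp_pos t).le] at this
      exact (le_abs_self _).trans this
    have hxc : (|ν| + 1) * t ≤ x * Real.cosh t := by
      calc (|ν| + 1) * t ≤ x / 2 * Real.exp t := ht'
      _ ≤ x * Real.cosh t := by nlinarith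
    have key : Real.exp (-x * Real.cosh t) * Real.cosh (ν * t) ≤ Real.exp (-t) := by
      calc Real.exp (-x * Real.cosh t) * Real.cosh (ν * t)
          ≤ Real.exp (-x * Real.cosh t) * Real.exp (|ν| * t) := by
            exact mul_le_mul_of_nonneg_left hch (Real.exp_pos _).le
      _ = Real.exp (|ν| * t - x * Real.cosh t) := by rw [← Real.exp_add]; ring_nf
      _ ≤ Real.exp (-t) := Real.exp_le_exp.2 (by nlinarith)
    rw [Real.norm_eq_abs, Real.norm_eq_abs, abs_of_nonneg
      (mul_nonneg (Real.exp_pos _).le (Real.cosh_pos _).le), abs_of_nonneg (Real.exp_pos _).le,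
      one_mul]
    simpa using key

lemma lintegral_image_eq_abs_deriv {s : Set ℝ} {f f' : ℝ → ℝ} (hs : MeasurableSet s)
    (hf' : ∀ x ∈ s, HasDerivWithinAt f (f' x) s x) (hf : InjOn f s) (g : ℝ → ENNReal) :
    ∫⁻ x in f '' s, g x = ∫⁻ x in s, ENNReal.ofReal |f' x| * g (f x) := by
  simpa only [ContinuousLinearMap.det_toSpanSingleton] using
    lintegral_image_eq_lintegral_abs_det_fderiv_mul volume hs
      (fun x hx => (hf' x hx).hasFDerivWithinAt) hf g

lemma exp_scale_image {k : ℝ} (hk : 0 < k) :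
    (fun t : ℝ => k * Real.exp (t / 2)) '' univ = Ioi 0 := by
  ext x
  simp only [image_univ, mem_range, mem_Ioi]
  constructor
  · rintro ⟨t, rfl⟩
    positivity
  · intro hx
    exact ⟨2 * Real.log (x / k), by
      rw [mul_div_cancel_left₀ _ (two_ne_zero : (2:ℝ) ≠ 0), Real.exp_log (by positivity),
        mul_div_cancel₀ _ hk.ne']⟩

lemma exp_scale_inj {k : ℝ} (hk : 0 < k) :
    InjOn (fun t : ℝ => k * Real.exp (t / 2)) univ := by
  intro s _ t _ h
  have := mul_left_cancel₀ hk.ne' h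
  have := Real.exp_injective this
  linarith

lemma exp_scale_deriv {k : ℝ} (t : ℝ) :
    HasDerivWithinAt (fun t : ℝ => k * Real.exp (t / 2)) (k * Real.exp (t / 2) / 2) univ t := by
  have h : HasDerivAt (fun t : ℝ => k * Real.exp (t / 2)) (k * (Real.exp (t / 2) * (1 / 2))) t := by
    exact (((Real.hasDerivAt_exp (t / 2)).comp t ((hasDerivAt_id t).div_const 2))).const_mul k
  exact h.hasDerivWithinAt.congr_deriv (by ring)

lemma exp_rpow' (a r : ℝ) : Real.exp a ^ r = Real.exp (a * r) := by
  rw [Real.rpow_def_of_pos (Real.exp_pos a), Real.log_exp]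

-- pointwise algebraic identity after substitution x = √k · e^{t/2}
lemma pointwise_sub (m₁ m₂ Ω₁ Ω₂ z : ℝ) (hm₁ : 0 < m₁) (hm₂ : 0 < m₂)
    (hΩ₁ : 0 < Ω₁) (hΩ₂ : 0 < Ω₂) (hz : 0 < z) (t : ℝ) :
    |Real.sqrt (z * Real.sqrt ((m₂/Ω₂) / (m₁/Ω₁))) * Real.exp (t/2) / 2| *
      (nakPdf m₁ Ω₁ (Real.sqrt (z * Real.sqrt ((m₂/Ω₂) / (m₁/Ω₁))) * Real.exp (t/2)) *
        nakPdf m₂ Ω₂ (z / (Real.sqrt (z * Real.sqrt ((m₂/Ω₂) / (m₁/Ω₁))) * Real.exp (t/2))) *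
          (Real.sqrt (z * Real.sqrt ((m₂/Ω₂) / (m₁/Ω₁))) * Real.exp (t/2))⁻¹) =
    ((2 * m₁ ^ m₁ / (Real.Gamma m₁ * Ω₁ ^ m₁)) * (2 * m₂ ^ m₂ / (Real.Gamma m₂ * Ω₂ ^ m₂)) *
        z ^ (2 * m₂ - 1) * (z * Real.sqrt ((m₂/Ω₂) / (m₁/Ω₁))) ^ (m₁ - m₂) / 2) *
      (Real.exp ((m₁ - m₂) * t) *
        Real.exp (-(2 * z * Real.sqrt ((m₁/Ω₁) * (m₂/Ω₂))) * Real.cosh t)) := by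
  set a := m₁ / Ω₁ with ha_def
  set b := m₂ / Ω₂ with hb_def
  have ha : 0 < a := div_pos hm₁ hΩ₁
  have hb : 0 < b := div_pos hm₂ hΩ₂
  set k := z * Real.sqrt (b / a) with hk_def
  have hk : 0 < k := mul_pos hz (Real.sqrt_pos.2 (div_pos hb ha))
  set φ := Real.sqrt k * Real.exp (t/2) with hφ_def
  have hφ : 0 < φ := mul_pos (Real.sqrt_pos.2 hk) (Real.exp_pos _)
  have hzφ : 0 < z / φ := div_pos hz hφ
  rw [nakPdf, nakPdf, if_pos hφ, if_pos hzφ]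
  have hφsq : φ ^ 2 = k * Real.exp t := by
    rw [hφ_def, mul_pow, Real.sq_sqrt hk.le, ← Real.exp_nat_mul]
    norm_num
    left; ring
  have hak : a * k = z * Real.sqrt (a * b) := by
    rw [hk_def]
    rw [show a * (z * Real.sqrt (b / a)) = z * (Real.sqrt (a^2) * Real.sqrt (b/a)) by
      rw [Real.sqrt_sq ha.le]; ring, ← Real.sqrt_mul (sq_nonneg a)]
    congr 2
    field_simp
  have hbz : b * (z^2 / k) = z * Real.sqrt (a * b) := by
    rw [hk_def]
    have : z ^ 2 / (z * Real.sqrt (b / a)) = z * Real.sqrt (a / b) := by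
      rw [show Real.sqrt (a/b) = (Real.sqrt (b/a))⁻¹ by
        rw [← Real.sqrt_inv]; congr 1; rw [inv_div]]
      field_simp
    rw [this, show b * (z * Real.sqrt (a/b)) = z * (Real.sqrt (b^2) * Real.sqrt (a/b)) by
      rw [Real.sqrt_sq hb.le]; ring, ← Real.sqrt_mul (sq_nonneg b)]
    congr 2
    field_simp
  -- exponentials
  have hexp1 : -m₁ * φ ^ 2 / Ω₁ = -(z * Real.sqrt (a * b) * Real.exp t) := by
    have h0 : -m₁ * φ ^ 2 / Ω₁ = -(a * φ ^ 2) := by rw [ha_def]; ring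
    rw [h0, hφsq, ← mul_assoc, hak]
  have hexp2 : -m₂ * (z / φ) ^ 2 / Ω₂ = -(z * Real.sqrt (a * b) * Real.exp (-t)) := by
    have h0 : -m₂ * (z / φ) ^ 2 / Ω₂ = -(b * (z / φ) ^ 2) := by rw [hb_def]; ring
    have h1 : (z / φ) ^ 2 = z ^ 2 / k * Real.exp (-t) := by
      rw [div_pow, hφsq, Real.exp_neg]
      field_simp
    rw [h0, h1, ← mul_assoc, hbz]
  -- rpow pieces
  have hdiv : (z / φ) ^ (2 * m₂ - 1) = z ^ (2 * m₂ - 1) / φ ^ (2 * m₂ - 1) :=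
    Real.div_rpow hz.le hφ.le _
  have hφpow : φ ^ (2 * m₁ - 1) / φ ^ (2 * m₂ - 1) = φ ^ (2 * (m₁ - m₂)) := by
    rw [← Real.rpow_sub hφ]
    congr 1; ring
  have hφν : φ ^ (2 * (m₁ - m₂)) = k ^ (m₁ - m₂) * Real.exp ((m₁ - m₂) * t) := by
    rw [hφ_def, Real.mul_rpow (Real.sqrt_nonneg k) (Real.exp_pos _).le,
      Real.sqrt_eq_rpow, ← Real.rpow_mul hk.le, exp_rpow']
    congr 2 <;> ring
  rw [hexp1, hexp2, hdiv, abs_of_pos (by positivity : (0:ℝ) < φ / 2)]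
  have key2 : φ ^ (2*m₁-1) = k ^ (m₁-m₂) * Real.exp ((m₁-m₂)*t) * φ ^ (2*m₂-1) := by
    rw [← hφν, ← hφpow]
    field_simp
  rw [Real.cosh_eq,
    show -(2 * z * Real.sqrt (a*b)) * ((Real.exp t + Real.exp (-t))/2)
      = -(z * Real.sqrt (a*b) * Real.exp t) + -(z * Real.sqrt (a*b) * Real.exp (-t)) by ring,
    Real.exp_add, key2]
  have hφ21 : φ ^ (2*m₂-1) ≠ 0 := by
    have : (0:ℝ) < φ ^ (2*m₂-1) := Real.rpow_pos_of_pos hφ _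
    exact this.ne'
  field_simp

lemma const_eq (m₁ m₂ Ω₁ Ω₂ z : ℝ) (hm₁ : 0 < m₁) (hm₂ : 0 < m₂)
    (hΩ₁ : 0 < Ω₁) (hΩ₂ : 0 < Ω₂) (hz : 0 < z) :
    2 * ((2 * m₁ ^ m₁ / (Real.Gamma m₁ * Ω₁ ^ m₁)) * (2 * m₂ ^ m₂ / (Real.Gamma m₂ * Ω₂ ^ m₂)) *
      z ^ (2 * m₂ - 1) * (z * Real.sqrt ((m₂/Ω₂) / (m₁/Ω₁))) ^ (m₁ - m₂) / 2) =
    4 * z ^ (m₁ + m₂ - 1) / (Real.Gamma m₁ * Real.Gamma m₂) *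
      (m₁ * m₂ / (Ω₁ * Ω₂)) ^ ((m₁ + m₂) / 2) := by
  have ha : (0:ℝ) < m₁ / Ω₁ := div_pos hm₁ hΩ₁
  have hb : (0:ℝ) < m₂ / Ω₂ := div_pos hm₂ hΩ₂
  set a := m₁ / Ω₁
  set b := m₂ / Ω₂
  have hG₁ : (0:ℝ) < Real.Gamma m₁ := Real.Gamma_pos_of_pos hm₁
  have hG₂ : (0:ℝ) < Real.Gamma m₂ := Real.Gamma_pos_of_pos hm₂
  have h1 : (z * Real.sqrt (b / a)) ^ (m₁ - m₂) = z ^ (m₁ - m₂) * (b/a) ^ ((m₁ - m₂)/2) := by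
    rw [Real.mul_rpow hz.le (Real.sqrt_nonneg _), Real.sqrt_eq_rpow,
      ← Real.rpow_mul (div_pos hb ha).le]
    congr 2
    ring
  have h2 : z ^ (m₁ - m₂) * z ^ (2 * m₂ - 1) = z ^ (m₁ + m₂ - 1) := by
    rw [← Real.rpow_add hz]
    congr 1
    ring
  have h3 : m₁ ^ m₁ / Ω₁ ^ m₁ = a ^ m₁ := (Real.div_rpow hm₁.le hΩ₁.le m₁).symm
  have h4 : m₂ ^ m₂ / Ω₂ ^ m₂ = b ^ m₂ := (Real.div_rpow hm₂.le hΩ₂.le m₂).symm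
  have h5 : a ^ m₁ * (b/a) ^ ((m₁ - m₂)/2) * b ^ m₂ = (a*b) ^ ((m₁+m₂)/2) := by
    rw [Real.div_rpow hb.le ha.le, Real.mul_rpow ha.le hb.le]
    rw [show a ^ m₁ * (b ^ ((m₁-m₂)/2) / a ^ ((m₁-m₂)/2)) * b ^ m₂
      = (a ^ m₁ / a ^ ((m₁-m₂)/2)) * (b ^ m₂ * b ^ ((m₁-m₂)/2)) by ring]
    rw [← Real.rpow_sub ha, ← Real.rpow_add hb]
    congr 2 <;> ring
  have h6 : m₁ * m₂ / (Ω₁ * Ω₂) = a * b := (div_mul_div_comm m₁ Ω₁ m₂ Ω₂).symm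
  rw [h6, h1, ← h5, ← h2]
  have e1 : (2 * m₁ ^ m₁ / (Real.Gamma m₁ * Ω₁ ^ m₁)) = 2 * a ^ m₁ / Real.Gamma m₁ := by
    rw [← h3]; field_simp
  have e2 : (2 * m₂ ^ m₂ / (Real.Gamma m₂ * Ω₂ ^ m₂)) = 2 * b ^ m₂ / Real.Gamma m₂ := by
    rw [← h4]; field_simp
  rw [e1, e2]
  field_simp
  ring

set_option maxHeartbeats 1000000 in
lemma key_integral (m₁ m₂ Ω₁ Ω₂ z : ℝ) (hm₁ : 0 < m₁) (hm₂ : 0 < m₂)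
    (hΩ₁ : 0 < Ω₁) (hΩ₂ : 0 < Ω₂) (hz : 0 < z) :
    ∫⁻ x in Ioi (0:ℝ), ENNReal.ofReal (nakPdf m₁ Ω₁ x * nakPdf m₂ Ω₂ (z/x) * x⁻¹)
      = ENNReal.ofReal (dnakPdf m₁ m₂ Ω₁ Ω₂ z) := by
  have ha : (0:ℝ) < m₁ / Ω₁ := div_pos hm₁ hΩ₁
  have hb : (0:ℝ) < m₂ / Ω₂ := div_pos hm₂ hΩ₂
  have hk : (0:ℝ) < z * Real.sqrt ((m₂/Ω₂) / (m₁/Ω₁)) :=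
    mul_pos hz (Real.sqrt_pos.2 (div_pos hb ha))
  have hsk : (0:ℝ) < Real.sqrt (z * Real.sqrt ((m₂/Ω₂) / (m₁/Ω₁))) := Real.sqrt_pos.2 hk
  have hc : (0:ℝ) < 2 * z * Real.sqrt ((m₁/Ω₁) * (m₂/Ω₂)) := by positivity
  have hG₁ : (0:ℝ) < Real.Gamma m₁ := Real.Gamma_pos_of_pos hm₁
  have hG₂ : (0:ℝ) < Real.Gamma m₂ := Real.Gamma_pos_of_pos hm₂
  set sk := Real.sqrt (z * Real.sqrt ((m₂/Ω₂) / (m₁/Ω₁))) with hsk_def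
  set D := (2 * m₁ ^ m₁ / (Real.Gamma m₁ * Ω₁ ^ m₁)) * (2 * m₂ ^ m₂ / (Real.Gamma m₂ * Ω₂ ^ m₂)) *
      z ^ (2 * m₂ - 1) * (z * Real.sqrt ((m₂/Ω₂) / (m₁/Ω₁))) ^ (m₁ - m₂) / 2 with hD_def
  have hD0 : 0 ≤ D := by
    rw [hD_def]
    positivity
  set c := 2 * z * Real.sqrt ((m₁/Ω₁) * (m₂/Ω₂)) with hc_def
  rw [← exp_scale_image hsk,
    lintegral_image_eq_abs_deriv (f' := fun t => sk * Real.exp (t/2) / 2) MeasurableSet.univ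
      (fun t _ => exp_scale_deriv t) (exp_scale_inj hsk) _, Measure.restrict_univ]
  have hpt : ∀ t : ℝ, ENNReal.ofReal |sk * Real.exp (t/2) / 2| *
      ENNReal.ofReal (nakPdf m₁ Ω₁ (sk * Real.exp (t/2)) *
        nakPdf m₂ Ω₂ (z / (sk * Real.exp (t/2))) * (sk * Real.exp (t/2))⁻¹)
      = ENNReal.ofReal (D * (Real.exp ((m₁ - m₂) * t) * Real.exp (-c * Real.cosh t))) := by
    intro t
    rw [← ENNReal.ofReal_mul (abs_nonneg _), hsk_def, hD_def, hc_def,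
      pointwise_sub m₁ m₂ Ω₁ Ω₂ z hm₁ hm₂ hΩ₁ hΩ₂ hz t]
  rw [lintegral_congr hpt]
  set h : ℝ → ENNReal :=
    fun t => ENNReal.ofReal (D * (Real.exp ((m₁ - m₂) * t) * Real.exp (-c * Real.cosh t)))
    with hh_def
  have hhm : Measurable h := by
    rw [hh_def]
    exact (Continuous.measurable (by continuity)).ennreal_ofReal
  rw [← lintegral_add_compl h (measurableSet_Ioi (a := (0:ℝ))), compl_Ioi]
  have himg2 : Neg.neg '' Ioi (0:ℝ) = Iio 0 := by
    ext x
    simp only [mem_image, mem_Ioi, mem_Iio]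
    constructor
    · rintro ⟨y, hy, rfl⟩; linarith
    · intro hx; exact ⟨-x, by linarith, by ring⟩
  have hIic : ∫⁻ t in Iic (0:ℝ), h t = ∫⁻ t in Ioi (0:ℝ), h (-t) := by
    rw [← Measure.restrict_congr_set Iio_ae_eq_Iic, ← himg2,
      lintegral_image_eq_abs_deriv (f' := fun _ => (-1:ℝ)) measurableSet_Ioi
        (fun t _ => (hasDerivAt_neg t).hasDerivWithinAt) (neg_injective.injOn) h]
    simp
  rw [hIic, ← lintegral_add_left hhm (fun t => h (-t))]
  have hfold : ∀ t : ℝ, h t + h (-t)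
      = ENNReal.ofReal (2 * D * (Real.exp (-c * Real.cosh t) * Real.cosh ((m₁ - m₂) * t))) := by
    intro t
    rw [hh_def]
    simp only
    rw [Real.cosh_neg, ← ENNReal.ofReal_add (by positivity) (by positivity)]
    congr 1
    rw [Real.cosh_eq ((m₁ - m₂) * t), show (m₁ - m₂) * -t = -((m₁ - m₂) * t) by ring]
    ring
  rw [lintegral_congr hfold]
  have h2D : (0:ℝ) ≤ 2 * D := by positivity
  have hwm : Measurable fun t : ℝ =>
      ENNReal.ofReal (Real.exp (-c * Real.cosh t) * Real.cosh ((m₁ - m₂) * t)) :=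
    (Continuous.measurable (((Real.continuous_exp.comp (continuous_const.mul
      Real.continuous_cosh)).mul (Real.continuous_cosh.comp
      (continuous_const.mul continuous_id))))).ennreal_ofReal
  simp_rw [ENNReal.ofReal_mul h2D]
  rw [lintegral_const_mul _ hwm,
    ← ofReal_integral_eq_lintegral_ofReal (besselK_integrand_integrableOn (m₁ - m₂) hc)
      (ae_of_all _ fun t => by positivity),
    ← ENNReal.ofReal_mul h2D]
  congr 1
  rw [dnakPdf, if_pos hz]
  have h6 : m₁ * m₂ / (Ω₁ * Ω₂) = (m₁/Ω₁) * (m₂/Ω₂) := (div_mul_div_comm m₁ Ω₁ m₂ Ω₂).symm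
  rw [hD_def, hc_def]
  rw [show (2:ℝ) * ((2 * m₁ ^ m₁ / (Real.Gamma m₁ * Ω₁ ^ m₁)) *
      (2 * m₂ ^ m₂ / (Real.Gamma m₂ * Ω₂ ^ m₂)) * z ^ (2 * m₂ - 1) *
      (z * Real.sqrt ((m₂/Ω₂) / (m₁/Ω₁))) ^ (m₁ - m₂) / 2) =
    4 * z ^ (m₁ + m₂ - 1) / (Real.Gamma m₁ * Real.Gamma m₂) *
      (m₁ * m₂ / (Ω₁ * Ω₂)) ^ ((m₁ + m₂) / 2) from
    const_eq m₁ m₂ Ω₁ Ω₂ z hm₁ hm₂ hΩ₁ hΩ₂ hz, h6]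
  congr 1

lemma slice_lemma (m Ω : ℝ) {x : ℝ} (hx : 0 < x) {s : Set ℝ} (hs : MeasurableSet s) :
    ∫⁻ y in (fun y => x * y) ⁻¹' s, ENNReal.ofReal (nakPdf m Ω y)
      = ENNReal.ofReal x⁻¹ * ∫⁻ z in s, ENNReal.ofReal (nakPdf m Ω (z / x)) := by
  have hg : Measurable fun z => s.indicator (fun z => ENNReal.ofReal (nakPdf m Ω (z / x))) z :=
    (((measurable_nakPdf m Ω).comp (measurable_id.div_const x)).ennreal_ofReal).indicator hs
  have hcomp : ∀ y, ((fun y => x * y) ⁻¹' s).indicator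
      (fun y => ENNReal.ofReal (nakPdf m Ω y)) y
      = s.indicator (fun z => ENNReal.ofReal (nakPdf m Ω (z / x))) (x * y) := by
    intro y
    by_cases hy : x * y ∈ s
    · rw [Set.indicator_of_mem hy, Set.indicator_of_mem (by exact hy),
        mul_div_cancel_left₀ _ hx.ne']
    · rw [Set.indicator_of_notMem hy, Set.indicator_of_notMem (by exact hy)]
  rw [← lintegral_indicator (hs.preimage (measurable_const_mul x)) _]
  calc ∫⁻ y, ((fun y => x * y) ⁻¹' s).indicator (fun y => ENNReal.ofReal (nakPdf m Ω y)) y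
      = ∫⁻ y, s.indicator (fun z => ENNReal.ofReal (nakPdf m Ω (z / x))) (x * y) := by
        exact lintegral_congr hcomp
    _ = ∫⁻ z, s.indicator (fun z => ENNReal.ofReal (nakPdf m Ω (z / x))) z
          ∂(Measure.map (fun y => x * y) volume) := by
        rw [lintegral_map hg (measurable_const_mul x)]
    _ = ENNReal.ofReal x⁻¹ * ∫⁻ z in s, ENNReal.ofReal (nakPdf m Ω (z / x)) := by
        rw [Real.map_volume_mul_left hx.ne', lintegral_smul_measure,
          abs_of_pos (inv_pos.2 hx), lintegral_indicator hs _, smul_eq_mul]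

set_option maxHeartbeats 1000000 in
/-- The product `Z = h₁ h₂` of independent Nakagami-m variables has the
double-Nakagami-m density: the pushforward of the product of the two laws
under multiplication is the measure with the claimed density. -/
theorem stmt15 (m₁ m₂ Ω₁ Ω₂ : ℝ) (hm₁ : 0 < m₁) (hm₂ : 0 < m₂)
    (hΩ₁ : 0 < Ω₁) (hΩ₂ : 0 < Ω₂) :
    Measure.map (fun p : ℝ × ℝ => p.1 * p.2)
        ((nakMeasure m₁ Ω₁).prod (nakMeasure m₂ Ω₂)) =
      volume.withDensity fun z => ENNReal.ofReal (dnakPdf m₁ m₂ Ω₁ Ω₂ z) := by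
  have hf₁ : Measurable fun x => ENNReal.ofReal (nakPdf m₁ Ω₁ x) :=
    (measurable_nakPdf m₁ Ω₁).ennreal_ofReal
  have hf₂ : Measurable fun x => ENNReal.ofReal (nakPdf m₂ Ω₂ x) :=
    (measurable_nakPdf m₂ Ω₂).ennreal_ofReal
  refine Measure.ext fun s hs => ?_
  rw [Measure.map_apply (f := fun p : ℝ × ℝ => p.1 * p.2) (measurable_fst.mul measurable_snd) hs, withDensity_apply _ hs]
  have hE : MeasurableSet ((fun p : ℝ × ℝ => p.1 * p.2) ⁻¹' s) :=
    hs.preimage (measurable_fst.mul measurable_snd)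
  rw [nakMeasure, nakMeasure, Measure.prod_apply hE]
  -- slice sets
  have hslice_set : ∀ x : ℝ, (Prod.mk x ⁻¹' ((fun p : ℝ × ℝ => p.1 * p.2) ⁻¹' s))
      = (fun y => x * y) ⁻¹' s := fun x => rfl
  -- inner measure as lintegral
  have hinner : ∀ x : ℝ, (volume.withDensity fun y => ENNReal.ofReal (nakPdf m₂ Ω₂ y))
      (Prod.mk x ⁻¹' ((fun p : ℝ × ℝ => p.1 * p.2) ⁻¹' s))
      = ∫⁻ y in (fun y => x * y) ⁻¹' s, ENNReal.ofReal (nakPdf m₂ Ω₂ y) := by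
    intro x
    rw [hslice_set x, withDensity_apply _ (hs.preimage (measurable_const_mul x))]
  rw [lintegral_congr hinner]
  -- outer withDensity
  have hFmeas : Measurable fun x =>
      ∫⁻ y in (fun y => x * y) ⁻¹' s, ENNReal.ofReal (nakPdf m₂ Ω₂ y) := by
    have : ∀ x : ℝ, ∫⁻ y in (fun y => x * y) ⁻¹' s, ENNReal.ofReal (nakPdf m₂ Ω₂ y)
        = ∫⁻ y, ((fun p : ℝ × ℝ => p.1 * p.2) ⁻¹' s).indicator
            (fun p : ℝ × ℝ => ENNReal.ofReal (nakPdf m₂ Ω₂ p.2)) (x, y) := by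
      intro x
      rw [← lintegral_indicator (hs.preimage (measurable_const_mul x)) _]
      refine lintegral_congr fun y => ?_
      by_cases hy : x * y ∈ s
      · rw [Set.indicator_of_mem (by exact hy), Set.indicator_of_mem (by exact hy)]
      · rw [Set.indicator_of_notMem (by exact hy), Set.indicator_of_notMem (by exact hy)]
    simp_rw [this]
    exact Measurable.lintegral_prod_right
      ((hf₂.comp measurable_snd).indicator hE)
  rw [lintegral_withDensity_eq_lintegral_mul _ hf₁ hFmeas]
  simp only [Pi.mul_apply]
  -- restrict outer integral to Ioi 0
  have hrestr : ∫⁻ x, ENNReal.ofReal (nakPdf m₁ Ω₁ x) *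
        ∫⁻ y in (fun y => x * y) ⁻¹' s, ENNReal.ofReal (nakPdf m₂ Ω₂ y)
      = ∫⁻ x in Ioi (0:ℝ), ENNReal.ofReal (nakPdf m₁ Ω₁ x) *
        ∫⁻ y in (fun y => x * y) ⁻¹' s, ENNReal.ofReal (nakPdf m₂ Ω₂ y) := by
    rw [← lintegral_indicator measurableSet_Ioi]
    refine lintegral_congr fun x => ?_
    by_cases hx : (0:ℝ) < x
    · rw [Set.indicator_of_mem (mem_Ioi.2 hx)]
    · rw [Set.indicator_of_notMem (by simpa using hx), nakPdf_of_nonpos (not_lt.1 hx),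
        ENNReal.ofReal_zero, zero_mul]
  rw [hrestr]
  -- rewrite each slice via slice_lemma and push constants inside
  have hstep : ∀ x ∈ Ioi (0:ℝ), ENNReal.ofReal (nakPdf m₁ Ω₁ x) *
        ∫⁻ y in (fun y => x * y) ⁻¹' s, ENNReal.ofReal (nakPdf m₂ Ω₂ y)
      = ∫⁻ z in s, ENNReal.ofReal (nakPdf m₁ Ω₁ x * nakPdf m₂ Ω₂ (z / x) * x⁻¹) := by
    intro x hx
    rw [slice_lemma m₂ Ω₂ hx hs, ← mul_assoc,
      ← lintegral_const_mul _ (show Measurable fun z : ℝ => ENNReal.ofReal (nakPdf m₂ Ω₂ (z / x))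
        from ((measurable_nakPdf m₂ Ω₂).comp (measurable_id.div_const x)).ennreal_ofReal)]
    refine lintegral_congr fun z => ?_
    rw [← ENNReal.ofReal_mul (nakPdf_nonneg hm₁ hΩ₁ x), ← ENNReal.ofReal_mul
      (mul_nonneg (nakPdf_nonneg hm₁ hΩ₁ x) (inv_nonneg.2 (le_of_lt hx)))]
    congr 1
    ring
  rw [setLIntegral_congr_fun measurableSet_Ioi hstep]
  -- Tonelli swap
  have hswap : ∫⁻ x in Ioi (0:ℝ), ∫⁻ z in s,
        ENNReal.ofReal (nakPdf m₁ Ω₁ x * nakPdf m₂ Ω₂ (z / x) * x⁻¹)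
      = ∫⁻ z in s, ∫⁻ x in Ioi (0:ℝ),
        ENNReal.ofReal (nakPdf m₁ Ω₁ x * nakPdf m₂ Ω₂ (z / x) * x⁻¹) := by
    apply lintegral_lintegral_swap
    apply Measurable.aemeasurable
    refine Measurable.ennreal_ofReal ?_
    exact (((measurable_nakPdf m₁ Ω₁).comp measurable_fst).mul
      ((measurable_nakPdf m₂ Ω₂).comp (measurable_snd.div measurable_fst))).mul
      (measurable_fst.inv)
  rw [hswap]
  -- pointwise identification of the inner integral with the claimed density
  have hae : ∀ᵐ z ∂(volume.restrict s), (∫⁻ x in Ioi (0:ℝ),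
      ENNReal.ofReal (nakPdf m₁ Ω₁ x * nakPdf m₂ Ω₂ (z / x) * x⁻¹))
      = ENNReal.ofReal (dnakPdf m₁ m₂ Ω₁ Ω₂ z) := by
    refine ae_restrict_of_ae ?_
    have hne : ∀ᵐ z : ℝ ∂volume, z ≠ 0 := by
      rw [ae_iff]
      have : {a : ℝ | ¬a ≠ 0} = {(0:ℝ)} := by ext z; simp
      rw [this]
      exact volume_singleton
    filter_upwards [hne] with z hz0
    rcases hz0.lt_or_gt with hzneg | hzpos
    · have : ∀ x ∈ Ioi (0:ℝ),
          ENNReal.ofReal (nakPdf m₁ Ω₁ x * nakPdf m₂ Ω₂ (z / x) * x⁻¹) = 0 := by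
        intro x hx
        rw [nakPdf_of_nonpos (le_of_lt (div_neg_of_neg_of_pos hzneg (mem_Ioi.1 hx)))]
        simp
      rw [setLIntegral_congr_fun measurableSet_Ioi this, lintegral_zero,
        dnakPdf, if_neg (by linarith), ENNReal.ofReal_zero]
    · exact key_integral m₁ m₂ Ω₁ Ω₂ z hm₁ hm₂ hΩ₁ hΩ₂ hzpos
  rw [lintegral_congr_ae hae]
end
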